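/- Let G be a finite simple bipartite graph each of whose edges lies in a cycle, and let e_j, e_k be edges of G. If the set of induced (chordless) cycles C of G with −h_j + h(v(C)) ∈ H(G) differs from the set of induced cycles C with −h_k + h(v(C)) ∈ H(G), then KL_{−h_j} ≠ KL_{−h_k}. -/

import Mathlib

open Finset

/-- The vector `h_e = δ_i + δ_j ∈ ℤ^m` associated with an edge `e = {i,j}`. -/
noncomputable def edgeVec {m : ℕ} (s : Sym2 (Fin m)) : Fin m → ℤ :=
  Sym2.lift ⟨fun i j => Pi.single i 1 + Pi.single j 1, fun _ _ => add_comm _ _⟩ s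

/-- The cycle vector `v(C) ∈ ℤ^n` of a closed walk `C`, with respect to an enumeration
`e : Fin n → Sym2 (Fin m)` of the edges of the graph: the alternating sum
`∑_t (-1)^t ε_{k_t}` where `e_{k_t}` is the `t`-th edge of `C`. -/
def cycVec {m n : ℕ} (e : Fin n → Sym2 (Fin m)) {G : SimpleGraph (Fin m)} {x : Fin m}
    (C : G.Walk x x) : Fin n → ℤ :=
  fun j => ∑ t ∈ Finset.range C.edges.length,
    if C.edges[t]? = some (e j) then (-1 : ℤ) ^ t else 0

/-- `h(v(C)) = ∑_{j ∈ V(C)} δ_j ∈ ℤ^m` for a closed walk `C`. -/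
noncomputable def suppVec {m : ℕ} {G : SimpleGraph (Fin m)} {x : Fin m}
    (C : G.Walk x x) : Fin m → ℤ :=
  ∑ u ∈ C.support.toFinset, Pi.single u 1

/-- A cycle is induced (chordless) if every edge of `G` joining two of its vertices is one
of its edges. -/
def Chordless {m : ℕ} (G : SimpleGraph (Fin m)) {x : Fin m} (C : G.Walk x x) : Prop :=
  ∀ u w : Fin m, G.Adj u w → u ∈ C.support → w ∈ C.support → s(u, w) ∈ C.edges


open SimpleGraph

section Aux

variable {m n : ℕ} {G : SimpleGraph (Fin m)}

lemma edgeVec_mk (a b : Fin m) :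
    edgeVec s(a, b) = Pi.single a (1 : ℤ) + Pi.single b 1 := rfl

lemma edgeVec_nonneg (s : Sym2 (Fin m)) (i : Fin m) : 0 ≤ edgeVec s i := by
  induction s using Sym2.ind with
  | _ a b =>
    rw [edgeVec_mk]
    have h1 : (0:ℤ) ≤ (Pi.single a 1 : Fin m → ℤ) i := by
      rw [Pi.single_apply]; split <;> norm_num
    have h2 : (0:ℤ) ≤ (Pi.single b 1 : Fin m → ℤ) i := by
      rw [Pi.single_apply]; split <;> norm_num
    exact add_nonneg h1 h2

lemma H_nonneg (e : Fin n → Sym2 (Fin m)) {H : AddSubmonoid (Fin m → ℤ)}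
    (hH : H = AddSubmonoid.closure (Set.range fun j => edgeVec (e j)))
    {z : Fin m → ℤ} (hz : z ∈ H) (i : Fin m) : 0 ≤ z i := by
  subst hH
  induction hz using AddSubmonoid.closure_induction with
  | mem x hx => obtain ⟨j, rfl⟩ := hx; exact edgeVec_nonneg _ _
  | zero => simp
  | add x y _ _ hx hy => exact add_nonneg hx hy

lemma pathSum (e : Fin n → Sym2 (Fin m))
    (herange : ∀ s, s ∈ G.edgeSet ↔ s ∈ Set.range e)
    {H : AddSubmonoid (Fin m → ℤ)}
    (hH : H = AddSubmonoid.closure (Set.range fun j => edgeVec (e j))) :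
    ∀ (l : ℕ), Odd l → ∀ (u v : Fin m) (P : G.Walk u v), P.length = l →
      (P.support.map fun w => (Pi.single w 1 : Fin m → ℤ)).sum
        - (Pi.single u 1 + Pi.single v 1) ∈ H := by
  intro l
  induction l using Nat.strong_induction_on with
  | _ l IH =>
    intro hodd u v P hlen
    cases P with
    | nil => simp at hlen; subst hlen; simp [Nat.odd_iff] at hodd
    | @cons _ w1 _ h q =>
      cases q with
      | nil =>
        have : ((Walk.cons h .nil : G.Walk u v).support.map
            fun w => (Pi.single w 1 : Fin m → ℤ)).sum
            - (Pi.single u 1 + Pi.single v 1) = 0 := by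
          simp [Walk.support_cons]
        rw [this]; exact H.zero_mem
      | @cons _ w2 _ h2 R =>
        have hlR : R.length = l - 2 ∧ 2 ≤ l := by
          simp [Walk.length_cons] at hlen; omega
        have hoddR : Odd (l - 2) := by
          rcases hodd with ⟨t, ht⟩
          exact ⟨t - 1, by omega⟩
        have hA := IH (l - 2) (by omega) hoddR w2 v R hlR.1
        have hedge : s(w1, w2) ∈ Set.range e := (herange _).mp h2
        obtain ⟨i, hi⟩ := hedge
        have hgen : edgeVec (e i) ∈ H := by
          rw [hH]; exact AddSubmonoid.subset_closure ⟨i, rfl⟩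
        have key : ((Walk.cons h (Walk.cons h2 R) : G.Walk u v).support.map
            fun w => (Pi.single w 1 : Fin m → ℤ)).sum
            - (Pi.single u 1 + Pi.single v 1)
            = edgeVec (e i) + ((R.support.map fun w => (Pi.single w 1 : Fin m → ℤ)).sum
              - (Pi.single w2 1 + Pi.single v 1)) := by
          rw [hi, edgeVec_mk]
          simp only [Walk.support_cons, List.map_cons, List.sum_cons]
          ring
        rw [key]
        exact H.add_mem hgen hA

lemma walk_parity {f : Fin m → Bool} (hf : ∀ u v, G.Adj u v → f u ≠ f v) :
    ∀ {u v : Fin m} (P : G.Walk u v), (f u = f v ↔ Even P.length) := by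
  intro u v P
  induction P with
  | nil => simp
  | @cons u w v h p ih =>
    have huw := hf _ _ h
    simp only [Walk.length_cons, Nat.even_add_one, ← ih]
    cases hw : f w <;> cases hu : f u <;> cases hv : f v <;> simp_all

lemma edge_at_start : ∀ {a c b : Fin m} (Q : G.Walk a c), Q.support.Nodup →
    s(a, b) ∈ Q.edges → ∃ (h : G.Adj a b) (Q' : G.Walk b c), Q = Walk.cons h Q' := by
  intro a c b Q hnd he
  cases Q with
  | nil => simp at he
  | @cons _ w _ h Q' =>
    rw [Walk.edges_cons, List.mem_cons] at he
    rcases he with he | he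
    · have hbw : b = w := by
        rcases Sym2.eq_iff.mp he with ⟨-, rfl⟩ | ⟨h1, h2⟩
        · rfl
        · exact absurd (h1 ▸ h) (G.irrefl)
      subst hbw
      exact ⟨h, Q', rfl⟩
    · exfalso
      have haQ : a ∈ Q'.support := Q'.fst_mem_support_of_mem_edges he
      rw [Walk.support_cons, List.nodup_cons] at hnd
      exact hnd.1 haQ

end Aux

section Aux2

variable {m n : ℕ} {G : SimpleGraph (Fin m)}

lemma suppVec_apply {x : Fin m} (C : G.Walk x x) (u : Fin m) :
    suppVec C u = if u ∈ C.support.toFinset then 1 else 0 := by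
  classical
  rw [suppVec, Finset.sum_apply]
  have : ∀ v ∈ C.support.toFinset, (Pi.single v 1 : Fin m → ℤ) u
      = if u = v then 1 else 0 := fun v _ => Pi.single_apply v 1 u
  rw [Finset.sum_congr rfl this, Finset.sum_ite_eq]

lemma suppVec_toFinset_tail {x : Fin m} (C : G.Walk x x) (hn : ¬ C.Nil) :
    C.support.toFinset = C.support.tail.toFinset := by
  cases C with
  | nil => exact absurd Walk.Nil.nil hn
  | cons h q =>
    rw [Walk.support_cons]
    simp only [List.toFinset_cons, List.tail_cons]
    exact Finset.insert_eq_self.mpr (by simpa using q.end_mem_support)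

/-- The key structural lemma: if `s(a,b)` is an edge of an even cycle `C`, then
`suppVec C - (δ_a + δ_b) ∈ H`. -/
lemma cycle_edge_mem_base (e : Fin n → Sym2 (Fin m))
    (herange : ∀ s, s ∈ G.edgeSet ↔ s ∈ Set.range e)
    {H : AddSubmonoid (Fin m → ℤ)}
    (hH : H = AddSubmonoid.closure (Set.range fun j => edgeVec (e j)))
    {a b : Fin m} (C : G.Walk a a) (hC : C.IsCycle) (heven : Even C.length)
    (hab : s(a, b) ∈ C.edges) :
    suppVec C - (Pi.single a 1 + Pi.single b 1) ∈ H := by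
  classical
  cases C with
  | nil => simp at hab
  | @cons _ c _ h0 P =>
    have hnd : P.support.Nodup := by
      have := hC.2
      simpa [Walk.support_cons] using this
    have hlen : (Walk.cons h0 P).length = P.length + 1 := by simp
    have hPodd : Odd P.length := by
      rcases heven with ⟨t, ht⟩
      rw [hlen] at ht
      have h3 := hC.three_le_length
      exact ⟨t - 1, by omega⟩
    rw [Walk.edges_cons, List.mem_cons] at hab
    rcases hab with hab | hab
    · have hbc : b = c := by
        rcases Sym2.eq_iff.mp hab with ⟨-, rfl⟩ | ⟨h1, h2⟩
        · rfl
        · exact absurd (h1 ▸ h0) (G.irrefl)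
      subst hbc
      have hfin : (Walk.cons h0 P).support.toFinset = P.support.toFinset := by
        rw [Walk.support_cons]
        simp only [List.toFinset_cons]
        exact Finset.insert_eq_self.mpr (by simpa using P.end_mem_support)
      have hsum : suppVec (Walk.cons h0 P)
          = (P.support.map fun w => (Pi.single w 1 : Fin m → ℤ)).sum := by
        rw [suppVec, hfin, List.sum_toFinset _ hnd]
      have := pathSum e herange hH P.length hPodd b a P rfl
      rw [hsum]
      have hcomm : (Pi.single a 1 + Pi.single b 1 : Fin m → ℤ)
          = Pi.single b 1 + Pi.single a 1 := add_comm _ _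
      rw [hcomm]
      exact this
    · -- the edge lies inside P; it must be the last edge
      have hrev : s(a, b) ∈ P.reverse.edges := by
        rw [Walk.edges_reverse, List.mem_reverse]; exact hab
      have hndrev : P.reverse.support.Nodup := by
        rw [Walk.support_reverse, List.nodup_reverse]; exact hnd
      obtain ⟨hadj, Q, hQ⟩ := edge_at_start P.reverse hndrev hrev
      -- P.reverse = cons hadj Q with Q : Walk b c
      have hPsupp : P.support = Q.support.reverse ++ [a] := by
        have : P.support.reverse = a :: Q.support := by
          rw [← Walk.support_reverse, hQ, Walk.support_cons]
        calc P.support = P.support.reverse.reverse := by rw [List.reverse_reverse]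
          _ = (a :: Q.support).reverse := by rw [this]
          _ = Q.support.reverse ++ [a] := by simp
      set W : G.Walk a b := Walk.cons h0 Q.reverse with hW
      have hWsupp : W.support = a :: Q.support.reverse := by
        rw [hW, Walk.support_cons, Walk.support_reverse]
      have haQ : a ∉ Q.support := by
        rw [hPsupp] at hnd
        have := List.disjoint_of_nodup_append hnd
        intro hmem
        exact this (List.mem_reverse.mpr hmem) (List.mem_singleton.mpr rfl)
      have hWnd : W.support.Nodup := by
        rw [hWsupp, List.nodup_cons]
        constructor
        · rw [List.mem_reverse]; exact haQ
        · rw [hPsupp] at hnd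
          exact (List.nodup_append.mp hnd).1
      have hfin : (Walk.cons h0 P).support.toFinset = W.support.toFinset := by
        rw [Walk.support_cons, hPsupp, hWsupp]
        ext z
        simp [or_comm, or_assoc, or_left_comm]
      have hWlen : W.length = P.length := by
        have : P.reverse.length = Q.length + 1 := by rw [hQ]; simp
        rw [Walk.length_reverse] at this
        rw [hW]; simp [this]
      have hsum : suppVec (Walk.cons h0 P)
          = (W.support.map fun w => (Pi.single w 1 : Fin m → ℤ)).sum := by
        rw [suppVec, hfin, List.sum_toFinset _ hWnd]
      have := pathSum e herange hH P.length hPodd a b W (by rw [hWlen])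
      rw [hsum]
      exact this

end Aux2

section Aux3

variable {m n : ℕ} {G : SimpleGraph (Fin m)}

lemma cycle_edge_mem (e : Fin n → Sym2 (Fin m))
    (herange : ∀ s, s ∈ G.edgeSet ↔ s ∈ Set.range e)
    {H : AddSubmonoid (Fin m → ℤ)}
    (hH : H = AddSubmonoid.closure (Set.range fun j => edgeVec (e j)))
    {x a b : Fin m} (C : G.Walk x x) (hC : C.IsCycle) (heven : Even C.length)
    (hab : s(a, b) ∈ C.edges) :
    -(edgeVec s(a, b)) + suppVec C ∈ H := by
  classical
  have ha : a ∈ C.support := C.fst_mem_support_of_mem_edges hab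
  set C' := C.rotate a ha with hC'def
  have hC' : C'.IsCycle := hC.rotate ha
  have hab' : s(a, b) ∈ C'.edges := (C.rotate_edges a ha).mem_iff.mpr hab
  have hlen' : C'.length = C.length := by
    rw [← Walk.length_edges, ← Walk.length_edges]
    exact (C.rotate_edges a ha).perm.length_eq
  have hsupp : suppVec C' = suppVec C := by
    rw [suppVec, suppVec, suppVec_toFinset_tail C' hC'.not_nil,
      suppVec_toFinset_tail C hC.not_nil,
      List.toFinset_eq_of_perm _ _ (C.support_rotate a ha).perm]
  have hmem := cycle_edge_mem_base e herange hH C' hC' (hlen' ▸ heven) hab'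
  rw [hsupp] at hmem
  have heq : -(edgeVec s(a, b)) + suppVec C
      = suppVec C - (Pi.single a 1 + Pi.single b 1) := by
    rw [edgeVec_mk]; ring
  rw [heq]
  exact hmem

end Aux3

section Aux4

variable {m n : ℕ} {G : SimpleGraph (Fin m)}

lemma cycVec_eq_zero (e : Fin n → Sym2 (Fin m)) {x : Fin m} (C : G.Walk x x)
    {k : Fin n} (hk : e k ∉ C.edges) : cycVec e C k = 0 := by
  apply Finset.sum_eq_zero
  intro t _
  rw [if_neg]
  intro hsome
  exact hk (List.mem_of_getElem? hsome)

lemma cycVec_of_mem (e : Fin n → Sym2 (Fin m)) {x : Fin m} (C : G.Walk x x)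
    (hC : C.IsCycle) {k : Fin n} (hk : e k ∈ C.edges) :
    cycVec e C k = (-1) ^ (C.edges.idxOf (e k)) := by
  classical
  have hnd : C.edges.Nodup := hC.edges_nodup
  have hlt : C.edges.idxOf (e k) < C.edges.length := List.idxOf_lt_length_iff.mpr hk
  rw [cycVec]
  rw [Finset.sum_eq_single_of_mem (C.edges.idxOf (e k)) (Finset.mem_range.mpr hlt)]
  · rw [if_pos (List.getElem?_idxOf hk)]
  · intro t ht hne
    rw [if_neg]
    intro hsome
    obtain ⟨hlt', heq⟩ := List.getElem?_eq_some_iff.mp hsome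
    apply hne
    have : C.edges[t] = C.edges[C.edges.idxOf (e k)] := by
      rw [heq, List.getElem_idxOf hlt]
    exact (hnd.getElem_inj_iff).mp this

lemma endpoint_mem_support (e : Fin n → Sym2 (Fin m))
    {H : AddSubmonoid (Fin m → ℤ)}
    (hH : H = AddSubmonoid.closure (Set.range fun j => edgeVec (e j)))
    {x a b : Fin m} (C : G.Walk x x)
    (hmem : -(edgeVec s(a, b)) + suppVec C ∈ H) :
    a ∈ C.support ∧ b ∈ C.support := by
  classical
  constructor
  · have ha := H_nonneg e hH hmem a
    simp only [Pi.add_apply, Pi.neg_apply] at ha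
    rw [edgeVec_mk, suppVec_apply] at ha
    simp only [Pi.add_apply, Pi.single_apply, if_pos rfl] at ha
    by_contra hmemb
    rw [if_neg (fun hh => hmemb (List.mem_toFinset.mp hh))] at ha
    split_ifs at ha <;> omega
  · have hb := H_nonneg e hH hmem b
    simp only [Pi.add_apply, Pi.neg_apply] at hb
    rw [edgeVec_mk, suppVec_apply] at hb
    simp only [Pi.add_apply, Pi.single_apply, if_pos rfl] at hb
    by_contra hmemb
    rw [if_neg (fun hh => hmemb (List.mem_toFinset.mp hh))] at hb
    split_ifs at hb <;> omega

end Aux4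

section Main

variable {m n : ℕ} {G : SimpleGraph (Fin m)}

/-- If there is an induced cycle `C₀` with `-h_k + h(v(C₀)) ∈ H` but `-h_j + h(v(C₀)) ∉ H`,
then the spans differ. -/
lemma spans_ne (K : Type*) [Field K]
    (hbip : ∃ f : Fin m → Bool, ∀ u v, G.Adj u v → f u ≠ f v)
    (e : Fin n → Sym2 (Fin m))
    (herange : ∀ s, s ∈ G.edgeSet ↔ s ∈ Set.range e)
    {H : AddSubmonoid (Fin m → ℤ)}
    (hH : H = AddSubmonoid.closure (Set.range fun j => edgeVec (e j)))
    (j k : Fin n) {x : Fin m} (C₀ : G.Walk x x) (hC₀ : C₀.IsCycle)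
    (hch : Chordless G C₀)
    (hkin : -(edgeVec (e k)) + suppVec C₀ ∈ H)
    (hjout : -(edgeVec (e j)) + suppVec C₀ ∉ H) :
    Submodule.span K {y : Fin n → K | ∃ (p : Fin m) (C : G.Walk p p), C.IsCycle ∧
        -(edgeVec (e j)) + suppVec C ∉ H ∧ y = fun t => ((cycVec e C t : ℤ) : K)} ≠
      Submodule.span K {y : Fin n → K | ∃ (p : Fin m) (C : G.Walk p p), C.IsCycle ∧
        -(edgeVec (e k)) + suppVec C ∉ H ∧ y = fun t => ((cycVec e C t : ℤ) : K)} := by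
  classical
  obtain ⟨f, hf⟩ := hbip
  -- all cycles have even length
  have hev : ∀ (p : Fin m) (C : G.Walk p p), Even C.length := fun p C =>
    (walk_parity hf C).mp rfl
  intro hEq
  -- write e k = s(a, b)
  obtain ⟨a, b, hab⟩ : ∃ a b, e k = s(a, b) :=
    Sym2.ind (fun a b => ⟨a, b, rfl⟩) (e k)
  have hadj : G.Adj a b := by
    have : e k ∈ G.edgeSet := (herange _).mpr ⟨k, rfl⟩
    rwa [hab] at this
  have hmem : -(edgeVec s(a, b)) + suppVec C₀ ∈ H := by rwa [hab] at hkin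
  obtain ⟨haC, hbC⟩ := endpoint_mem_support e hH C₀ hmem
  have hek : e k ∈ C₀.edges := by rw [hab]; exact hch a b hadj haC hbC
  -- the vector v(C₀) lies in span_j
  set v : Fin n → K := fun t => ((cycVec e C₀ t : ℤ) : K) with hv
  have hvmem : v ∈ Submodule.span K {y : Fin n → K | ∃ (p : Fin m) (C : G.Walk p p),
      C.IsCycle ∧ -(edgeVec (e j)) + suppVec C ∉ H ∧
      y = fun t => ((cycVec e C t : ℤ) : K)} :=
    Submodule.subset_span ⟨x, C₀, hC₀, hjout, rfl⟩
  rw [hEq] at hvmem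
  -- every generator of span_k vanishes at coordinate k
  have hker : Submodule.span K {y : Fin n → K | ∃ (p : Fin m) (C : G.Walk p p),
      C.IsCycle ∧ -(edgeVec (e k)) + suppVec C ∉ H ∧
      y = fun t => ((cycVec e C t : ℤ) : K)}
      ≤ LinearMap.ker (LinearMap.proj (R := K) (φ := fun _ : Fin n => K) k) := by
    rw [Submodule.span_le]
    rintro y ⟨p, C, hC, hout, rfl⟩
    have hnk : e k ∉ C.edges := by
      intro hin
      apply hout
      have : s(a, b) ∈ C.edges := by rwa [hab] at hin
      have := cycle_edge_mem e herange hH C hC (hev p C) this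
      rwa [← hab] at this
    simp only [SetLike.mem_coe, LinearMap.mem_ker, LinearMap.proj_apply]
    rw [cycVec_eq_zero e C hnk]
    norm_num
  have hvk0 : v k = 0 := hker hvmem
  -- but v k = ±1
  rw [hv] at hvk0
  simp only at hvk0
  rw [cycVec_of_mem e C₀ hC₀ hek] at hvk0
  have : ((-1 : ℤ) ^ (C₀.edges.idxOf (e k)) : ℤ) ≠ 0 := by
    apply pow_ne_zero; norm_num
  rw [Int.cast_pow] at hvk0
  simp only [Int.cast_neg, Int.cast_one] at hvk0
  exact (pow_ne_zero _ (by norm_num : (-1 : K) ≠ 0)) hvk0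

end Main

/-- Let `G` be a bipartite graph each of whose edges lies in a cycle and let
`e j`, `e k` be edges of `G`.  If the set of induced cycles `C` with `-h_j + h(v(C)) ∈ H(G)`
differs from the set of induced cycles `C` with `-h_k + h(v(C)) ∈ H(G)`, then
`KL_{-h_j} ≠ KL_{-h_k}`. -/
theorem stmt_14 (K : Type*) [Field K] (m n : ℕ) (G : SimpleGraph (Fin m))
    (hbip : ∃ f : Fin m → Bool, ∀ u v, G.Adj u v → f u ≠ f v)
    (e : Fin n → Sym2 (Fin m)) (heinj : Function.Injective e)
    (herange : ∀ s, s ∈ G.edgeSet ↔ s ∈ Set.range e)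
    (hcyc : ∀ j : Fin n, ∃ (x : Fin m) (C : G.Walk x x), C.IsCycle ∧ e j ∈ C.edges)
    (H : AddSubmonoid (Fin m → ℤ))
    (hH : H = AddSubmonoid.closure (Set.range fun j => edgeVec (e j)))
    (j k : Fin n)
    (hdiff : ¬ ∀ (x : Fin m) (C : G.Walk x x), C.IsCycle → Chordless G C →
      ((-(edgeVec (e j)) + suppVec C ∈ H) ↔ (-(edgeVec (e k)) + suppVec C ∈ H))) :
    Submodule.span K {y : Fin n → K | ∃ (p : Fin m) (C : G.Walk p p), C.IsCycle ∧
        -(edgeVec (e j)) + suppVec C ∉ H ∧ y = fun t => ((cycVec e C t : ℤ) : K)} ≠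
      Submodule.span K {y : Fin n → K | ∃ (p : Fin m) (C : G.Walk p p), C.IsCycle ∧
        -(edgeVec (e k)) + suppVec C ∉ H ∧ y = fun t => ((cycVec e C t : ℤ) : K)} := by
  simp only [not_forall] at hdiff
  obtain ⟨x, C₀, hC₀, hch, hne⟩ := hdiff
  by_cases hj : -(edgeVec (e j)) + suppVec C₀ ∈ H
  · have hk : -(edgeVec (e k)) + suppVec C₀ ∉ H := fun hk =>
      hne ⟨fun _ => hk, fun _ => hj⟩
    exact (spans_ne K hbip e herange hH k j C₀ hC₀ hch hj hk).symm
  · have hk : -(edgeVec (e k)) + suppVec C₀ ∈ H := by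
      by_contra hk
      exact hne ⟨fun h => absurd h hj, fun h => absurd h hk⟩
    exact spans_ne K hbip e herange hH j k C₀ hC₀ hch hk hj
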